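/- arXiv:1210.2199 — 3 statements merged into one kernel-verified Lean document; each statement's English description precedes it below -/
import Mathlib

section
/- Let d ≥ 1 and L ≥ 1. Let G₁, …, G_L be invertible d×d complex matrices with G₁G₂⋯G_L = I, and let θ₁ < θ₂ < ⋯ < θ_L < θ₁ + 2π be real numbers. Suppose d×d complex matrices Φ₁⁺, Φ₁⁻, …, Φ_L⁺, Φ_L⁻ and S satisfy: Φᵢ⁺ = Φᵢ⁻ Gᵢ for every 1 ≤ i ≤ L; Φᵢ₊₁⁻ = Φᵢ⁺ + (θᵢ₊₁ − θᵢ)·S for every 1 ≤ i ≤ L−1; and Φ₁⁻ = Φ_L⁺ + (θ₁ + 2π − θ_L)·S. If the d×d matrix (θ₁ + 2π − θ_L)·I + Σ_{i=2}^{L} (θᵢ − θᵢ₋₁)·GᵢGᵢ₊₁⋯G_L is invertible (the 'nonsingular junction condition'), then S = 0. -/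
/-!
Put `Pₖ = Gₖ Gₖ₊₁ ⋯ G_L`, so that `Pₖ = Gₖ Pₖ₊₁`. Then the jump and continuity relations
telescope: `Φₖ₊₁⁺ Pₖ₊₂ = Φₖ⁺ Pₖ₊₁ + (θₖ₊₁ − θₖ) S Pₖ₊₁`. Going once around the junction point
and using `P₁ = G₁ ⋯ G_L = I = P_{L+1}` brings us back to `Φ₁⁻`, and what is left is
`S · M = 0`, where `M` is the junction matrix. Hence `S = 0` as soon as `M` is invertible.
-/

open Finset

theorem List.prod_map_drop_range_eq_mul {M : Type*} [Monoid M] (f : ℕ → M) {k L : ℕ}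
    (hk : k < L) :
    (((List.range L).drop k).map f).prod = f k * (((List.range L).drop (k + 1)).map f).prod := by
  rw [List.drop_eq_getElem_cons (by simpa using hk)]
  simp

section Junction

variable {K A : Type*} [CommSemiring K] [Ring A] [Algebra K A]
  {L : ℕ} {G P Φp Φm : ℕ → A} {S : A} {c : ℕ → K}

theorem junction_telescope (hP : ∀ i < L, P i = G i * P (i + 1))
    (hjump : ∀ i < L, Φp i = Φm i * G i)
    (hcont : ∀ i, i + 1 < L → Φm (i + 1) = Φp i + c (i + 1) • S) :
    ∀ k < L, Φp k * P (k + 1) = Φm 0 * P 0 + ∑ i ∈ Ico 1 (k + 1), c i • (S * P i)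
  | 0, hL => by simp [hjump 0 hL, hP 0 hL, mul_assoc]
  | k + 1, hk => by
    have hstep : Φp (k + 1) * P (k + 2) = Φp k * P (k + 1) + c (k + 1) • (S * P (k + 1)) := by
      rw [hjump (k + 1) hk, mul_assoc, ← hP (k + 1) hk, hcont k hk, add_mul, smul_mul_assoc]
    rw [hstep, junction_telescope hP hjump hcont k (by omega),
      sum_Ico_succ_top (by omega : 1 ≤ k + 1), add_assoc]

theorem mul_junction_matrix_eq_zero (hL : 0 < L) (hP : ∀ i < L, P i = G i * P (i + 1))
    (hP₀ : P 0 = 1) (hPL : P L = 1)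
    (hjump : ∀ i < L, Φp i = Φm i * G i)
    (hcont : ∀ i, i + 1 < L → Φm (i + 1) = Φp i + c (i + 1) • S)
    (c₀ : K) (hwrap : Φm 0 = Φp (L - 1) + c₀ • S) :
    S * (c₀ • (1 : A) + ∑ i ∈ Ico 1 L, c i • P i) = 0 := by
  have hround := junction_telescope hP hjump hcont (L - 1) (by omega)
  rw [Nat.sub_add_cancel hL, hPL, hP₀, mul_one, mul_one, hwrap, add_assoc] at hround
  rw [mul_add, mul_smul_comm, mul_one, mul_sum]
  simpa only [mul_smul_comm] using left_eq_add.mp hround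

end Junction

theorem nonsingular_junction_condition_forces_zero_sum_general
    (d L : ℕ) (hL : 1 ≤ L)
    (G : ℕ → Matrix (Fin d) (Fin d) ℂ)
    (hGprod : ((List.range L).map G).prod = 1)
    (θ : ℕ → ℝ)
    (Φp Φm : ℕ → Matrix (Fin d) (Fin d) ℂ)
    (S : Matrix (Fin d) (Fin d) ℂ)
    (hjump : ∀ i < L, Φp i = Φm i * G i)
    (hcont : ∀ i, i + 1 < L →
      Φm (i + 1) = Φp i + (((θ (i + 1) - θ i : ℝ) : ℂ)) • S)
    (hwrap : Φm 0 = Φp (L - 1) + (((θ 0 + 2 * Real.pi - θ (L - 1) : ℝ) : ℂ)) • S)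
    (hnonsing : IsUnit
      ((((θ 0 + 2 * Real.pi - θ (L - 1) : ℝ) : ℂ)) • (1 : Matrix (Fin d) (Fin d) ℂ) +
        ∑ i ∈ Finset.Ico 1 L,
          (((θ i - θ (i - 1) : ℝ) : ℂ)) • (((List.range L).drop i).map G).prod)) :
    S = 0 := by
  set P : ℕ → Matrix (Fin d) (Fin d) ℂ := fun k => (((List.range L).drop k).map G).prod
  have hP : ∀ i < L, P i = G i * P (i + 1) := fun i hi => List.prod_map_drop_range_eq_mul G hi
  have hP₀ : P 0 = 1 := by simpa [P] using hGprod
  have hPL : P L = 1 := by simp [P, List.drop_eq_nil_of_le]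
  exact (hnonsing.mul_left_eq_zero).mp <|
    mul_junction_matrix_eq_zero (c := fun i => ((θ i - θ (i - 1) : ℝ) : ℂ)) hL hP hP₀ hPL
      hjump hcont _ hwrap

/-- **Nonsingular junction condition forces the zero sum condition.**
In 0-based indexing, `G i`, `θ i`, `Φp i`, `Φm i` for `0 ≤ i < L` model the jump
matrices `G₁,…,G_L` (invertible, with `G₁⋯G_L = I`), the angles
`θ₁ < ⋯ < θ_L < θ₁ + 2π`, and the boundary values `Φᵢ⁺, Φᵢ⁻` at a junction point of a
Riemann–Hilbert problem.  Assuming `Φᵢ⁺ = Φᵢ⁻ Gᵢ`, `Φᵢ₊₁⁻ = Φᵢ⁺ + (θᵢ₊₁ − θᵢ)·S` and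
`Φ₁⁻ = Φ_L⁺ + (θ₁ + 2π − θ_L)·S`, if the matrix
`(θ₁ + 2π − θ_L)·I + Σ_{i=2}^{L} (θᵢ − θᵢ₋₁)·GᵢGᵢ₊₁⋯G_L` is invertible
(the nonsingular junction condition), then `S = 0`. -/
theorem nonsingular_junction_condition_forces_zero_sum
    (d L : ℕ) (hd : 1 ≤ d) (hL : 1 ≤ L)
    (G : ℕ → Matrix (Fin d) (Fin d) ℂ)
    (hGunit : ∀ i < L, IsUnit (G i))
    (hGprod : ((List.range L).map G).prod = 1)
    (θ : ℕ → ℝ)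
    (hθmono : ∀ i, i + 1 < L → θ i < θ (i + 1))
    (hθwrap : θ (L - 1) < θ 0 + 2 * Real.pi)
    (Φp Φm : ℕ → Matrix (Fin d) (Fin d) ℂ)
    (S : Matrix (Fin d) (Fin d) ℂ)
    (hjump : ∀ i < L, Φp i = Φm i * G i)
    (hcont : ∀ i, i + 1 < L →
      Φm (i + 1) = Φp i + (((θ (i + 1) - θ i : ℝ) : ℂ)) • S)
    (hwrap : Φm 0 = Φp (L - 1) + (((θ 0 + 2 * Real.pi - θ (L - 1) : ℝ) : ℂ)) • S)
    (hnonsing : IsUnit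
      ((((θ 0 + 2 * Real.pi - θ (L - 1) : ℝ) : ℂ)) • (1 : Matrix (Fin d) (Fin d) ℂ) +
        ∑ i ∈ Finset.Ico 1 L,
          (((θ i - θ (i - 1) : ℝ) : ℂ)) • (((List.range L).drop i).map G).prod)) :
    S = 0 :=
  nonsingular_junction_condition_forces_zero_sum_general d L hL G hGprod θ Φp Φm S hjump hcont hwrap
    hnonsing
end

section
/- Let d ≥ 1 and L ≥ 1. Let G₁, …, G_L be d×d complex matrices with G₁G₂⋯G_L = I. Suppose d×d complex matrices Φ₁⁺, Φ₁⁻, …, Φ_L⁺, Φ_L⁻ satisfy: Φᵢ⁺ = Φᵢ⁻ Gᵢ for every 1 ≤ i ≤ L−1; Φᵢ₊₁⁻ = Φᵢ⁺ for every 1 ≤ i ≤ L−1; and Φ₁⁻ = Φ_L⁺. Then automatically Φ_L⁺ = Φ_L⁻ G_L; that is, the L-th jump condition is implied by the first L−1 jump conditions together with the continuity relations and the cyclic condition on the jump matrices. -/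
/-! Propagating the boundary value once around the junction through the first `L - 1` jumps
gives `Φ_L⁻ = Φ₁⁻ G₁ ⋯ G_{L-1}`; multiplying by `G_L` and using `G₁ ⋯ G_L = I` returns `Φ₁⁻`,
which the cyclic condition identifies with `Φ_L⁺`. -/

section Monoid

variable {M : Type*} [Monoid M]

theorem eq_mul_prod_range_of_jump_of_cont {n : ℕ} {G Φp Φm : ℕ → M}
    (hjump : ∀ i < n, Φp i = Φm i * G i) (hcont : ∀ i < n, Φm (i + 1) = Φp i) :
    ∀ i ≤ n, Φm i = Φm 0 * ((List.range i).map G).prod := by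
  intro i hi
  induction i with
  | zero => simp
  | succ i ih =>
    rw [hcont i hi, hjump i hi, ih (by omega), List.prod_range_succ, mul_assoc]

theorem last_jump_of_prod_eq_one {n : ℕ} {G Φp Φm : ℕ → M}
    (hGprod : ((List.range (n + 1)).map G).prod = 1)
    (hjump : ∀ i < n, Φp i = Φm i * G i) (hcont : ∀ i < n, Φm (i + 1) = Φp i)
    (hwrap : Φm 0 = Φp n) :
    Φp n = Φm n * G n :=
  calc Φp n = Φm 0 * ((List.range (n + 1)).map G).prod := by rw [hGprod, mul_one, hwrap]
    _ = Φm n * G n := by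
      rw [List.prod_range_succ, ← mul_assoc,
        ← eq_mul_prod_range_of_jump_of_cont hjump hcont n le_rfl]

end Monoid

theorem last_jump_condition_automatic_general
    (d L : ℕ) (hL : 1 ≤ L)
    (G : ℕ → Matrix (Fin d) (Fin d) ℂ)
    (hGprod : ((List.range L).map G).prod = 1)
    (Φp Φm : ℕ → Matrix (Fin d) (Fin d) ℂ)
    (hjump : ∀ i, i + 1 < L → Φp i = Φm i * G i)
    (hcont : ∀ i, i + 1 < L → Φm (i + 1) = Φp i)
    (hwrap : Φm 0 = Φp (L - 1)) :
    Φp (L - 1) = Φm (L - 1) * G (L - 1) := by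
  obtain ⟨n, rfl⟩ : ∃ n, L = n + 1 := ⟨L - 1, by omega⟩
  rw [Nat.add_sub_cancel] at hwrap ⊢
  exact last_jump_of_prod_eq_one hGprod (fun i hi => hjump i (by omega))
    (fun i hi => hcont i (by omega)) hwrap

/-- **The last jump condition is implied by the others.**
In 0-based indexing, `G i`, `Φp i`, `Φm i` for `0 ≤ i < L` model the jump matrices
`G₁,…,G_L` (with `G₁⋯G_L = I`) and the boundary values `Φᵢ⁺, Φᵢ⁻` at a junction point
of a Riemann–Hilbert problem.  If `Φᵢ⁺ = Φᵢ⁻ Gᵢ` for `1 ≤ i ≤ L−1`, `Φᵢ₊₁⁻ = Φᵢ⁺` for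
`1 ≤ i ≤ L−1`, and `Φ₁⁻ = Φ_L⁺`, then automatically `Φ_L⁺ = Φ_L⁻ G_L`. -/
theorem last_jump_condition_automatic
    (d L : ℕ) (hd : 1 ≤ d) (hL : 1 ≤ L)
    (G : ℕ → Matrix (Fin d) (Fin d) ℂ)
    (hGprod : ((List.range L).map G).prod = 1)
    (Φp Φm : ℕ → Matrix (Fin d) (Fin d) ℂ)
    (hjump : ∀ i, i + 1 < L → Φp i = Φm i * G i)
    (hcont : ∀ i, i + 1 < L → Φm (i + 1) = Φp i)
    (hwrap : Φm 0 = Φp (L - 1)) :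
    Φp (L - 1) = Φm (L - 1) * G (L - 1) :=
  last_jump_condition_automatic_general d L hL G hGprod Φp Φm hjump hcont hwrap
end

section
/- For every integer k ≥ 0, the function z ↦ C T_k(z) − (1/(2πi))·Log(z−1), defined for z ∈ ℂ∖[−1,1] (where C T_k(z) = (1/(2πi)) ∫_{−1}^{1} T_k(t)/(t−z) dt and Log is the principal branch of the complex logarithm), has a limit as z → 1 with z ∉ [−1,1], and this limit (the 'finite part' at the right endpoint) equals −Log(2)/(2πi) + (1/(iπ))·(μ_{k−1}(1) + μ_k(1)), where μ_k(1) = Σ_{j=1}^{⌊(k+1)/2⌋} 1/(2j−1) (an empty sum when ⌊(k+1)/2⌋ = 0, and μ_{−1}(1) = 0). -/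
open Complex Filter Topology

/-- `μ_k(1) = Σ_{j=1}^{⌊(k+1)/2⌋} 1/(2j−1)` (an empty sum when `⌊(k+1)/2⌋ = 0`). -/
noncomputable def muOne (k : ℕ) : ℂ :=
  ∑ j ∈ Finset.Icc 1 ((k + 1) / 2), (1 : ℂ) / (2 * (j : ℂ) - 1)

/-!
Write `I_k(z) = ∫_{-1}^{1} T_k(t)/(t - z) dt`. Near `1` off the segment, `z - t` stays in the
slit plane for `t ∈ [-1, 1]`, so `log (z - t)` is an antiderivative and
`I_0(z) = log (z - 1) - log (z + 1)`. Since `t/(t - z) = 1 + z/(t - z)`, the recurrence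
`T_{k+2} = 2X T_{k+1} - T_k` becomes `I_{k+2} = 2∫T_{k+1} + 2z I_{k+1} - I_k`, and subtracting
`log (z - 1)` costs only `2(z - 1) log (z - 1) → 0`. Hence the limits `L_k` of
`I_k(z) - log (z - 1)` satisfy `L_{k+2} = 2L_{k+1} - L_k + 2∫T_{k+1}`, and
`∫_{-1}^{1} T_m = 2/(1 - m²)` for even `m`, `0` for odd `m`, is exactly the second difference of
`μ_{k-1}(1) + μ_k(1)`.
-/

open Polynomial Polynomial.Chebyshev Set intervalIntegral

abbrev unitSegment : Set ℂ := (fun t : ℝ => (t : ℂ)) '' Icc (-1) 1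

noncomputable def cauchyIntegral (p : ℂ[X]) (z : ℂ) : ℂ :=
  ∫ t in (-1 : ℝ)..1, p.eval (t : ℂ) / ((t : ℂ) - z)

section CauchyIntegral

variable {z : ℂ}

lemma ofReal_sub_ne_zero_of_notMem_unitSegment (hz : z ∉ unitSegment) {t : ℝ}
    (ht : t ∈ uIcc (-1) 1) : (t : ℂ) - z ≠ 0 := fun h =>
  hz ⟨t, by simpa using ht, sub_eq_zero.mp h⟩

lemma intervalIntegrable_eval_div_sub (p : ℂ[X]) (hz : z ∉ unitSegment) :
    IntervalIntegrable (fun t : ℝ => p.eval (t : ℂ) / ((t : ℂ) - z)) MeasureTheory.volume (-1) 1 :=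
  ContinuousOn.intervalIntegrable <|
    (p.continuous.comp continuous_ofReal).continuousOn.div
      (continuous_ofReal.sub continuous_const).continuousOn
      fun _ ht => ofReal_sub_ne_zero_of_notMem_unitSegment hz ht

lemma cauchyIntegral_sub (p q : ℂ[X]) (hz : z ∉ unitSegment) :
    cauchyIntegral (p - q) z = cauchyIntegral p z - cauchyIntegral q z := by
  simp only [cauchyIntegral, eval_sub, sub_div]
  exact integral_sub (intervalIntegrable_eval_div_sub p hz) (intervalIntegrable_eval_div_sub q hz)

lemma cauchyIntegral_X_mul (p : ℂ[X]) (hz : z ∉ unitSegment) :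
    cauchyIntegral (X * p) z = (∫ t in (-1 : ℝ)..1, p.eval (t : ℂ)) + z * cauchyIntegral p z := by
  have hsplit : EqOn (fun t : ℝ => (X * p).eval (t : ℂ) / ((t : ℂ) - z))
      (fun t => p.eval (t : ℂ) + z * (p.eval (t : ℂ) / ((t : ℂ) - z))) (uIcc (-1) 1) := by
    intro t ht
    have := ofReal_sub_ne_zero_of_notMem_unitSegment hz ht
    simp only [eval_mul, eval_X]
    field_simp
    ring
  rw [cauchyIntegral, integral_congr hsplit, integral_add, integral_const_mul, cauchyIntegral]
  · exact (p.continuous.comp continuous_ofReal).intervalIntegrable _ _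
  · exact (intervalIntegrable_eval_div_sub p hz).const_mul z

lemma cauchyIntegral_two_mul (p : ℂ[X]) :
    cauchyIntegral (2 * p) z = 2 * cauchyIntegral p z := by
  simp only [cauchyIntegral, eval_mul, eval_ofNat, mul_div_assoc, integral_const_mul]

lemma cauchyIntegral_T_add_two (n : ℤ) (hz : z ∉ unitSegment) :
    cauchyIntegral (T ℂ (n + 2)) z = 2 * (∫ t in (-1 : ℝ)..1, (T ℂ (n + 1)).eval (t : ℂ)) +
      2 * z * cauchyIntegral (T ℂ (n + 1)) z - cauchyIntegral (T ℂ n) z := by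
  rw [T_add_two, cauchyIntegral_sub _ _ hz, mul_assoc, mul_left_comm, cauchyIntegral_X_mul _ hz,
    cauchyIntegral_two_mul]
  simp only [eval_mul, eval_ofNat, integral_const_mul]
  ring

end CauchyIntegral

lemma integral_ofReal_sub_inv {a b : ℝ} {z : ℂ} (h : ∀ t ∈ uIcc a b, z - t ∈ slitPlane) :
    ∫ t in a..b, ((t : ℂ) - z)⁻¹ = log (z - b) - log (z - a) := by
  have hderiv : ∀ t ∈ uIcc a b, HasDerivAt (fun t : ℝ => log (z - t)) ((t : ℂ) - z)⁻¹ t := by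
    intro t ht
    have := (((hasDerivAt_id (t : ℂ)).const_sub z).clog (h t ht)).comp_ofReal
    convert this using 1
    · rfl
    · rw [id, neg_div, ← div_neg, neg_sub, one_div]
  have hcont : ContinuousOn (fun t : ℝ => ((t : ℂ) - z)⁻¹) (uIcc a b) :=
    (continuous_ofReal.sub continuous_const).continuousOn.inv₀ fun t ht =>
      sub_ne_zero.mpr fun h' => slitPlane_ne_zero (h t ht) (by rw [h', sub_self])
  exact integral_eq_sub_of_hasDerivAt hderiv hcont.intervalIntegrable

lemma eventually_sub_ofReal_mem_slitPlane :
    ∀ᶠ z : ℂ in 𝓝[unitSegmentᶜ] 1, ∀ t ∈ uIcc (-1 : ℝ) 1, z - (t : ℂ) ∈ slitPlane := by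
  have hre : ∀ᶠ z : ℂ in 𝓝 1, 0 < z.re :=
    (continuous_re.tendsto 1).eventually_const_lt (by simp)
  filter_upwards [self_mem_nhdsWithin, nhdsWithin_le_nhds hre] with z hz hzre t ht
  rw [uIcc_of_le (by norm_num)] at ht
  rw [mem_slitPlane_iff]
  by_contra! hcon
  simp only [sub_re, ofReal_re, sub_im, ofReal_im, sub_zero] at hcon
  exact hz ⟨z.re, ⟨by linarith, by linarith [ht.2]⟩, Complex.ext (by simp) (by simp [hcon.2])⟩

lemma eventually_cauchyIntegral_one_eq :
    ∀ᶠ z in 𝓝[unitSegmentᶜ] (1 : ℂ), cauchyIntegral 1 z = log (z - 1) - log (z + 1) := by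
  filter_upwards [eventually_sub_ofReal_mem_slitPlane] with z hz
  simp only [cauchyIntegral, eval_one, one_div]
  rw [integral_ofReal_sub_inv hz]
  push_cast
  ring_nf

lemma tendsto_mul_log_nhds_zero : Tendsto (fun w : ℂ => w * log w) (𝓝 0) (𝓝 0) := by
  have hbound : ∀ w : ℂ, ‖w * log w‖ ≤ |‖w‖ * Real.log ‖w‖| + Real.pi * ‖w‖ := fun w =>
    calc ‖w * log w‖ ≤ ‖w‖ * (|Real.log ‖w‖| + Real.pi) := by
          rw [norm_mul]
          gcongr
          calc ‖log w‖ ≤ |(log w).re| + |(log w).im| := norm_le_abs_re_add_abs_im _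
            _ ≤ |Real.log ‖w‖| + Real.pi := by rw [log_re, log_im]; gcongr; exact abs_arg_le_pi w
      _ = |‖w‖ * Real.log ‖w‖| + Real.pi * ‖w‖ := by rw [abs_mul, abs_norm]; ring
  have hcont : Continuous fun x : ℝ => |x * Real.log x| + Real.pi * x :=
    Real.continuous_mul_log.abs.add (continuous_const_mul Real.pi)
  refine squeeze_zero_norm hbound ?_
  simpa [Function.comp_def] using (hcont.tendsto 0).comp (tendsto_norm_zero (E := ℂ))

lemma tendsto_sub_one_mul_log_sub_one :
    Tendsto (fun z : ℂ => (z - 1) * log (z - 1)) (𝓝 1) (𝓝 0) :=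
  tendsto_mul_log_nhds_zero.comp (tendsto_sub_nhds_zero_iff.mpr tendsto_id)

section ChebyshevIntegrals

lemma integral_eval_derivative (p : ℂ[X]) (a b : ℝ) :
    ∫ t in a..b, (derivative p).eval (t : ℂ) = p.eval (b : ℂ) - p.eval (a : ℂ) :=
  integral_eq_sub_of_hasDerivAt (fun t _ => (p.hasDerivAt (t : ℂ)).comp_ofReal)
    ((p.derivative.continuous.comp continuous_ofReal).intervalIntegrable _ _)

lemma derivative_pred_mul_T_succ_sub_succ_mul_T_pred (n : ℤ) :
    derivative ((n - 1 : ℂ[X]) * T ℂ (n + 1) - (n + 1 : ℂ[X]) * T ℂ (n - 1)) =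
      2 * ((n : ℂ[X]) ^ 2 - 1) * T ℂ n := by
  have hU := U_eq_two_mul_T_add_U ℂ (n - 2)
  simp only [derivative_sub, derivative_add, derivative_mul, derivative_intCast, derivative_one,
    T_derivative_eq_U, add_sub_cancel_right, sub_sub, sub_add_cancel] at hU ⊢
  push_cast
  norm_num at hU ⊢
  linear_combination ((n : ℂ[X]) ^ 2 - 1) * hU

lemma one_sub_sq_mul_integral_T (n : ℤ) :
    (1 - (n : ℂ) ^ 2) * ∫ t in (-1 : ℝ)..1, (T ℂ n).eval (t : ℂ) = 1 + (n.negOnePow : ℤ) := by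
  have h := integral_eval_derivative
    ((n - 1 : ℂ[X]) * T ℂ (n + 1) - (n + 1 : ℂ[X]) * T ℂ (n - 1)) (-1) 1
  rw [derivative_pred_mul_T_succ_sub_succ_mul_T_pred] at h
  simp only [eval_mul, eval_sub, eval_add, eval_pow, eval_ofNat, eval_one, eval_intCast,
    integral_const_mul, ofReal_one, ofReal_neg, T_eval_one, T_eval_neg_one, Int.negOnePow_succ,
    Int.negOnePow_sub, Int.negOnePow_one] at h
  push_cast at h
  linear_combination (-1 / 2 : ℂ) * h

lemma integral_T_of_odd {n : ℤ} (hn : Odd n) :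
    ∫ t in (-1 : ℝ)..1, (T ℂ n).eval (t : ℂ) = 0 := by
  have h := integral_comp_neg (fun t : ℝ => (T ℂ n).eval (t : ℂ)) (a := -1) (b := 1)
  simp only [ofReal_neg, T_eval_neg, Int.negOnePow_odd n hn, neg_neg, Units.val_neg, Units.val_one,
    Int.cast_neg, Int.cast_one, neg_one_mul, intervalIntegral.integral_neg] at h
  linear_combination -h / 2

lemma integral_T (m : ℕ) :
    ∫ t in (-1 : ℝ)..1, (T ℂ m).eval (t : ℂ) = if Even m then 2 / (1 - (m : ℂ) ^ 2) else 0 := by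
  split_ifs with hm
  · have hne : 1 - (m : ℂ) ^ 2 ≠ 0 := by
      intro h
      have : m ^ 2 = 1 := by exact_mod_cast (sub_eq_zero.mp h).symm
      simp only [pow_eq_one_iff, OfNat.ofNat_ne_zero, or_false] at this
      exact Nat.not_even_one (this ▸ hm)
    have h := one_sub_sq_mul_integral_T m
    rw [Int.negOnePow_even _ hm.natCast] at h
    push_cast at h
    rw [eq_div_iff hne, mul_comm, h]
    norm_num
  · exact integral_T_of_odd (Nat.not_even_iff_odd.mp hm).natCast

end ChebyshevIntegrals

section EndpointSums

lemma muOne_add_two (k : ℕ) : muOne (k + 2) = muOne k + 1 / (2 * ((k + 1) / 2 : ℕ) + 1) := by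
  rw [muOne, muOne, show (k + 2 + 1) / 2 = (k + 1) / 2 + 1 by omega,
    Finset.sum_Icc_succ_top (by omega)]
  push_cast
  ring

lemma muOne_succ_sub_muOne_pred (k : ℕ) :
    muOne (k + 1) - muOne (k - 1) = 1 / (2 * (k / 2 : ℕ) + 1) := by
  rcases k with _ | j
  · norm_num [muOne]
  · rw [muOne_add_two j]
    simp

lemma muOne_pair_add_two (k : ℕ) :
    muOne (k + 1) + muOne (k + 2) = 2 * (muOne k + muOne (k + 1)) - (muOne (k - 1) + muOne k) +
      ∫ t in (-1 : ℝ)..1, (T ℂ (k + 1 : ℕ)).eval (t : ℂ) := by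
  have hstep := muOne_add_two k
  have hprev := muOne_succ_sub_muOne_pred k
  rw [integral_T]
  rcases Nat.even_or_odd k with ⟨j, rfl⟩ | ⟨j, rfl⟩
  · rw [if_neg (by simp [parity_simps]), show (j + j + 1) / 2 = j by omega,
      show (j + j) / 2 = j by omega] at *
    linear_combination hstep - hprev
  · rw [if_pos (by simp [parity_simps]), show (2 * j + 1 + 1) / 2 = j + 1 by omega,
      show (2 * j + 1) / 2 = j by omega] at *
    have h1 : (2 * j + 1 : ℂ) ≠ 0 := by norm_cast
    have h3 : 2 * ((j : ℂ) + 1) + 1 ≠ 0 := by norm_cast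
    have h13 : 1 - (2 * (j : ℂ) + 1 + 1) ^ 2 ≠ 0 := fun h =>
      mul_ne_zero h1 h3 (by linear_combination -h)
    have hpartial : 1 / (2 * (j + 1 : ℕ) + 1 : ℂ) - 1 / (2 * (j : ℂ) + 1) =
        2 / (1 - ((2 * j + 1 + 1 : ℕ) : ℂ) ^ 2) := by
      push_cast
      field_simp
      ring
    linear_combination hstep - hprev + hpartial

end EndpointSums

lemma tendsto_cauchyIntegral_T_sub_log (k : ℕ) :
    Tendsto (fun z => cauchyIntegral (T ℂ k) z - log (z - 1)) (𝓝[unitSegmentᶜ] 1)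
      (𝓝 (2 * (muOne (k - 1) + muOne k) - log 2)) := by
  have hid : Tendsto (fun z : ℂ => z) (𝓝[unitSegmentᶜ] 1) (𝓝 1) := nhdsWithin_le_nhds
  have hlog : Tendsto (fun z : ℂ => log (z + 1)) (𝓝[unitSegmentᶜ] 1) (𝓝 (log 2)) := by
    simpa [one_add_one_eq_two] using (hid.add_const 1).clog (by norm_num [mem_slitPlane_iff])
  have hmulLog := tendsto_sub_one_mul_log_sub_one.mono_left (nhdsWithin_le_nhds (s := unitSegmentᶜ))
  induction k using Nat.twoStepInduction with
  | zero =>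
    convert hlog.neg.congr' ?_ using 2
    · simp [muOne]
    · filter_upwards [eventually_cauchyIntegral_one_eq] with z hz
      rw [Nat.cast_zero, T_zero, hz]
      ring
  | one =>
    have hlim := (hmulLog.const_add 2).sub (hid.mul hlog)
    convert hlim.congr' ?_ using 2
    · norm_num [muOne]
    · filter_upwards [self_mem_nhdsWithin, eventually_cauchyIntegral_one_eq] with z hz hone
      rw [Nat.cast_one, T_one, ← mul_one X, cauchyIntegral_X_mul _ hz, hone]
      simp only [eval_one, integral_const, sub_neg_eq_add, real_smul, ofReal_add, ofReal_one,
        mul_one]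
      ring
  | more k ih ih1 =>
    have hlim := (((hid.const_mul 2).mul ih1).sub ih).const_add
      (2 * ∫ t in (-1 : ℝ)..1, (T ℂ (k + 1 : ℕ)).eval (t : ℂ)) |>.add (hmulLog.const_mul 2)
    convert hlim.congr' ?_ using 2
    · rw [show k + 2 - 1 = k + 1 from rfl, Nat.add_sub_cancel, muOne_pair_add_two]
      ring
    · filter_upwards [self_mem_nhdsWithin] with z hz
      have hrec := cauchyIntegral_T_add_two k hz
      push_cast at hrec ⊢
      rw [hrec]
      ring

/-- **Finite part of the Cauchy transform of a Chebyshev polynomial at the right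
endpoint.**  For every `k ≥ 0`, the function `z ↦ C T_k(z) − (1/(2πi))·Log(z−1)` on
`ℂ∖[−1,1]`, where `C T_k(z) = (1/(2πi)) ∫_{−1}^1 T_k(t)/(t−z) dt`, has a limit as
`z → 1` with `z ∉ [−1,1]`, equal to
`−Log 2/(2πi) + (1/(iπ))·(μ_{k−1}(1) + μ_k(1))` (with `μ_{−1}(1) = 0`). -/
theorem cauchyTransform_chebyshevT_finite_part (k : ℕ) :
    Tendsto
      (fun z : ℂ =>
        (1 / (2 * (Real.pi : ℂ) * Complex.I)) *
            (∫ t in (-1 : ℝ)..1,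
              (Polynomial.Chebyshev.T ℂ (k : ℤ)).eval (t : ℂ) / ((t : ℂ) - z)) -
          (1 / (2 * (Real.pi : ℂ) * Complex.I)) * Complex.log (z - 1))
      (nhdsWithin 1 ((fun t : ℝ => (t : ℂ)) '' Set.Icc (-1) 1)ᶜ)
      (nhds (-(Complex.log 2) / (2 * (Real.pi : ℂ) * Complex.I) +
        (1 / (Complex.I * (Real.pi : ℂ))) *
          ((if k = 0 then 0 else muOne (k - 1)) + muOne k))) := by
  have hmu : (if k = 0 then 0 else muOne (k - 1)) = muOne (k - 1) := by
    split_ifs with hk <;> simp [hk, muOne]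
  have hpi : (Real.pi : ℂ) ≠ 0 := ofReal_ne_zero.mpr Real.pi_ne_zero
  convert (tendsto_cauchyIntegral_T_sub_log k).const_mul (1 / (2 * (Real.pi : ℂ) * I)) using 2
  · simp only [cauchyIntegral]
    ring
  · rw [hmu]
    field_simp
    ring
end
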